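/- arXiv:2009.06839 — 3 statements merged into one kernel-verified Lean document; each statement's English description precedes it below -/
import Mathlib

section
/- Let a, b ∈ ℝ with a ≥ −1/2 and −1 < b ≤ −1/2, let Z := ∫₀¹ x^a (1 − x)^b dx (which is finite and positive), and let μ be the Borel probability measure on ℝ with density x^a (1 − x)^b / Z on (0, 1) (and zero elsewhere). Then for every x₀ ∈ (0, 1) there exists a real number L ≤ 0 such that Re ∫ (x₀ + i t − x)^{−1} dμ(x) → L as t → 0⁺. In other words, the boundary values from the upper half plane of the real part of the Cauchy transform of μ on (0,1) exist and are nonpositive. -/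
/-!
For `t > 0`, `Re G_μ(x₀ + i t) = Z⁻¹ ∫₀¹ Q_t(x₀ - x) w(x) dx`, where `Q_t(y) = y / (y² + t²)` is
the conjugate Poisson kernel and `w(x) = x^a (1 - x)^b`. Since `w` is differentiable at `x₀`, its
difference quotient at `x₀` is integrable, and dominated convergence gives the limit
`Z⁻¹ p.v. ∫₀¹ w(x) / (x₀ - x) dx`.

Write `w = g u` with `u(x) = (x (1 - x))^(-1/2)` the arcsine weight and
`g(x) = x^(a + 1/2) (1 - x)^(b + 1/2)`, nondecreasing because `a + 1/2 ≥ 0 ≥ b + 1/2`. The principal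
value of `u` vanishes on `(0, 1)` (it has an explicit antiderivative), so
`p.v. ∫₀¹ w(x) / (x₀ - x) dx = ∫₀¹ (g(x) - g(x₀)) u(x) / (x₀ - x) dx ≤ 0`.
-/

open MeasureTheory Filter Topology Set Real

noncomputable section

def conjPoissonKernel (t y : ℝ) : ℝ := y / (y ^ 2 + t ^ 2)

lemma re_inv_ofReal_add_mul_I_sub (c t x : ℝ) :
    ((c : ℂ) + t * Complex.I - x)⁻¹.re = conjPoissonKernel t (c - x) := by
  simp only [Complex.inv_re, Complex.normSq_apply, Complex.sub_re, Complex.add_re,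
    Complex.mul_re, Complex.sub_im, Complex.add_im, Complex.mul_im, Complex.ofReal_re,
    Complex.ofReal_im, Complex.I_re, Complex.I_im, conjPoissonKernel]
  ring

lemma conjPoissonKernel_zero_left (y : ℝ) : conjPoissonKernel 0 y = y⁻¹ := by
  rcases eq_or_ne y 0 with rfl | hy
  · simp [conjPoissonKernel]
  · rw [conjPoissonKernel, zero_pow two_ne_zero, add_zero, sq, div_mul_cancel_right₀ hy]

lemma abs_conjPoissonKernel_le (t y : ℝ) : |conjPoissonKernel t y| ≤ |y|⁻¹ := by
  rcases eq_or_ne y 0 with rfl | hy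
  · simp [conjPoissonKernel]
  calc |conjPoissonKernel t y| = |y| / (y ^ 2 + t ^ 2) := by
        rw [conjPoissonKernel, abs_div, abs_of_pos (by positivity : 0 < y ^ 2 + t ^ 2)]
    _ ≤ |y| / y ^ 2 := by gcongr; exact le_add_of_nonneg_right (sq_nonneg t)
    _ = |y|⁻¹ := by rw [← sq_abs, sq, div_mul_cancel_left₀ (abs_ne_zero.mpr hy)]

lemma continuous_conjPoissonKernel_left (y : ℝ) : Continuous fun t => conjPoissonKernel t y := by
  rcases eq_or_ne y 0 with rfl | hy
  · simpa [conjPoissonKernel] using continuous_const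
  · exact continuous_const.div (by fun_prop) fun t => by positivity

lemma norm_conjPoissonKernel_mul_le (t y d : ℝ) : ‖conjPoissonKernel t y * d‖ ≤ ‖d / y‖ := by
  rw [Real.norm_eq_abs, Real.norm_eq_abs, abs_mul, abs_div, div_eq_inv_mul]
  exact mul_le_mul_of_nonneg_right (abs_conjPoissonKernel_le t y) (abs_nonneg d)

lemma continuous_conjPoissonKernel_right {t : ℝ} (ht : t ≠ 0) : Continuous (conjPoissonKernel t) :=
  continuous_id.div (by fun_prop) fun y => by positivity

@[fun_prop]
lemma measurable_conjPoissonKernel_right (t : ℝ) : Measurable (conjPoissonKernel t) := by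
  unfold conjPoissonKernel; fun_prop

section DifferenceQuotient

variable {f : ℝ → ℝ} {c : ℝ}

lemma conjPoissonKernel_mul_sub_eq (t x : ℝ) :
    conjPoissonKernel t (c - x) * (f x - f c)
      = (c - x) * conjPoissonKernel t (c - x) * ((f x - f c) / (c - x)) := by
  rcases eq_or_ne (c - x) 0 with h | h
  · simp [h, conjPoissonKernel]
  · field_simp

lemma integrableOn_conjPoissonKernel_mul_sub {s : Set ℝ} (t : ℝ)
    (hq : IntegrableOn (fun x => (f x - f c) / (c - x)) s) :
    IntegrableOn (fun x => conjPoissonKernel t (c - x) * (f x - f c)) s := by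
  refine hq.norm.mono' ?_ (ae_of_all _ fun x => ?_)
  · simp_rw [conjPoissonKernel_mul_sub_eq]
    exact (by fun_prop : Measurable fun x => (c - x) * conjPoissonKernel t (c - x))
      |>.aestronglyMeasurable.mul hq.aestronglyMeasurable
  · exact norm_conjPoissonKernel_mul_le t _ _

theorem tendsto_setIntegral_conjPoissonKernel_mul_sub {s : Set ℝ}
    (hq : IntegrableOn (fun x => (f x - f c) / (c - x)) s) :
    Tendsto (fun t => ∫ x in s, conjPoissonKernel t (c - x) * (f x - f c)) (𝓝 0)
      (𝓝 (∫ x in s, (f x - f c) / (c - x))) := by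
  have hlim : (fun x => (f x - f c) / (c - x))
      = fun x => conjPoissonKernel 0 (c - x) * (f x - f c) := by
    ext x
    rw [conjPoissonKernel_zero_left, div_eq_inv_mul]
  rw [hlim]
  exact tendsto_integral_filter_of_dominated_convergence _
    (Eventually.of_forall fun t => (integrableOn_conjPoissonKernel_mul_sub t hq).1)
    (Eventually.of_forall fun t => ae_of_all _ fun x => norm_conjPoissonKernel_mul_le t _ _)
    hq.norm (ae_of_all _ fun x => ((continuous_conjPoissonKernel_left _).tendsto 0).mul_const _)

theorem integrable_sub_div_sub_of_differentiableAt {μ : Measure ℝ} [IsFiniteMeasure μ]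
    (hf : Integrable f μ) (hd : DifferentiableAt ℝ f c) :
    Integrable (fun x => (f x - f c) / (c - x)) μ := by
  obtain ⟨C, hC, hCf⟩ := hd.isBigO_sub.exists_pos
  obtain ⟨ε, hε, hball⟩ := Metric.eventually_nhds_iff.mp hCf.bound
  refine Integrable.mono' (g := fun x => C + (|f x| + |f c|) / ε)
    ((integrable_const C).add ((hf.abs.add (integrable_const _)).div_const ε))
    ((hf.aemeasurable.sub_const _).div (by fun_prop : Measurable fun x : ℝ => c - x).aemeasurable
      |>.aestronglyMeasurable)
    (ae_of_all _ fun x => ?_)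
  have hpos : 0 ≤ (|f x| + |f c|) / ε := by positivity
  rw [Real.norm_eq_abs, abs_div]
  rcases lt_or_ge (dist x c) ε with hx | hx
  · have hlip : |f x - f c| ≤ C * |c - x| := by
      simpa [Real.norm_eq_abs, abs_sub_comm x c] using hball hx
    linarith [div_le_of_le_mul₀ (abs_nonneg _) hC.le hlip]
  · rw [Real.dist_eq, abs_sub_comm] at hx
    linarith [div_le_div₀ (by positivity) (abs_sub (f x) (f c)) hε hx]

end DifferenceQuotient

lemma integral_conjPoissonKernel {t : ℝ} (ht : t ≠ 0) (a b c : ℝ) :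
    ∫ x in a..b, conjPoissonKernel t (c - x)
      = (log ((c - a) ^ 2 + t ^ 2) - log ((b - c) ^ 2 + t ^ 2)) / 2 := by
  have hderiv : ∀ x : ℝ, HasDerivAt (fun y => -log ((c - y) ^ 2 + t ^ 2) / 2)
      (conjPoissonKernel t (c - x)) x := fun x => by
    have hden : (c - x) ^ 2 + t ^ 2 ≠ 0 := by positivity
    refine ((((hasDerivAt_id' x).const_sub c).fun_pow 2).add_const (t ^ 2)).log hden
      |>.neg |>.div_const 2 |>.congr_deriv ?_
    simp only [conjPoissonKernel]
    field_simp
    ring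
  rw [intervalIntegral.integral_eq_sub_of_hasDerivAt (fun x _ => hderiv x)
    (((continuous_conjPoissonKernel_right ht).comp (continuous_sub_left c)).intervalIntegrable _ _)]
  ring_nf

lemma tendsto_integral_conjPoissonKernel {a b c : ℝ} (ha : c ≠ a) (hb : c ≠ b) :
    Tendsto (fun t => ∫ x in a..b, conjPoissonKernel t (c - x)) (𝓝[≠] 0)
      (𝓝 (log (c - a) - log (b - c))) := by
  have hlog : ∀ d ≠ (0 : ℝ), Tendsto (fun t : ℝ => log (d ^ 2 + t ^ 2)) (𝓝 0) (𝓝 (2 * log d)) :=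
    fun d hd => by
      have := ((continuous_const.add (continuous_pow 2)).tendsto (0 : ℝ)).log
        (by positivity : d ^ 2 + (0 : ℝ) ^ 2 ≠ 0)
      simpa [Real.log_pow] using this
  have hlim := ((hlog _ (sub_ne_zero.mpr ha)).sub (hlog _ (sub_ne_zero.mpr hb.symm))).div_const 2
  rw [show (2 * log (c - a) - 2 * log (b - c)) / 2 = log (c - a) - log (b - c) by ring] at hlim
  refine (hlim.mono_left nhdsWithin_le_nhds).congr' ?_
  filter_upwards [self_mem_nhdsWithin] with t ht
  exact (integral_conjPoissonKernel ht a b c).symm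

/-- This is `p.v. ∫ₐᵇ f x / (c - x) dx` when the difference quotient of `f` at `c` is integrable,
since `p.v. ∫ₐᵇ dx / (c - x) = log (c - a) - log (b - c)`. -/
def cauchyPV (f : ℝ → ℝ) (a b c : ℝ) : ℝ :=
  (∫ x in Ioo a b, (f x - f c) / (c - x)) + f c * (log (c - a) - log (b - c))

theorem tendsto_setIntegral_conjPoissonKernel_mul {f : ℝ → ℝ} {a b c : ℝ} (hc : c ∈ Ioo a b)
    (hq : IntegrableOn (fun x => (f x - f c) / (c - x)) (Ioo a b)) :
    Tendsto (fun t => ∫ x in Ioo a b, conjPoissonKernel t (c - x) * f x) (𝓝[≠] 0)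
      (𝓝 (cauchyPV f a b c)) := by
  have hlim := ((tendsto_setIntegral_conjPoissonKernel_mul_sub hq).mono_left nhdsWithin_le_nhds).add
    ((tendsto_integral_conjPoissonKernel hc.1.ne' hc.2.ne).const_mul (f c))
  refine hlim.congr' ?_
  filter_upwards [self_mem_nhdsWithin] with t ht
  have hK : IntegrableOn (fun x => conjPoissonKernel t (c - x)) (Ioo a b) :=
    ((continuous_conjPoissonKernel_right ht).comp (continuous_sub_left c)).integrableOn_Icc.mono_set
      Ioo_subset_Icc_self
  rw [intervalIntegral.integral_of_le (hc.1.trans hc.2).le, integral_Ioc_eq_integral_Ioo,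
    ← integral_const_mul, ← integral_add (integrableOn_conjPoissonKernel_mul_sub t hq)
      (hK.const_mul _)]
  congr 1 with x
  ring

theorem cauchyPV_le_of_monotoneOn {f g u : ℝ → ℝ} {a b c : ℝ} (hc : c ∈ Ioo a b)
    (hg : MonotoneOn g (Ioo a b)) (hu : ∀ x ∈ Ioo a b, 0 ≤ u x)
    (hfgu : ∀ x ∈ Ioo a b, f x = g x * u x)
    (hqf : IntegrableOn (fun x => (f x - f c) / (c - x)) (Ioo a b))
    (hqu : IntegrableOn (fun x => (u x - u c) / (c - x)) (Ioo a b)) :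
    cauchyPV f a b c ≤ g c * cauchyPV u a b c := by
  have hsplit : (∫ x in Ioo a b, (f x - f c) / (c - x))
      - g c * ∫ x in Ioo a b, (u x - u c) / (c - x)
      = ∫ x in Ioo a b, (g x - g c) / (c - x) * u x := by
    rw [← integral_const_mul, ← integral_sub hqf (hqu.const_mul _)]
    refine setIntegral_congr_fun measurableSet_Ioo fun x hx => ?_
    simp only [hfgu x hx, hfgu c hc]
    ring
  have hnonpos : ∫ x in Ioo a b, (g x - g c) / (c - x) * u x ≤ 0 := by
    refine setIntegral_nonpos measurableSet_Ioo fun x hx =>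
      mul_nonpos_of_nonpos_of_nonneg ?_ (hu x hx)
    rcases le_total x c with hxc | hcx
    · exact div_nonpos_of_nonpos_of_nonneg (sub_nonpos.mpr (hg hx hc hxc)) (sub_nonneg.mpr hxc)
    · exact div_nonpos_of_nonneg_of_nonpos (sub_nonneg.mpr (hg hc hx hcx)) (sub_nonpos.mpr hcx)
  calc cauchyPV f a b c
      = ((∫ x in Ioo a b, (f x - f c) / (c - x)) - g c * ∫ x in Ioo a b, (u x - u c) / (c - x))
        + g c * cauchyPV u a b c := by
        rw [cauchyPV, cauchyPV, hfgu c hc]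
        ring
    _ ≤ g c * cauchyPV u a b c := by linarith

section JacobiWeight

def jacobiWeight (a b x : ℝ) : ℝ := x ^ a * (1 - x) ^ b

variable {a b x : ℝ}

lemma jacobiWeight_pos (hx : x ∈ Ioo 0 1) : 0 < jacobiWeight a b x :=
  mul_pos (rpow_pos_of_pos hx.1 _) (rpow_pos_of_pos (sub_pos.mpr hx.2) _)

lemma jacobiWeight_mul (a' b' : ℝ) (hx : x ∈ Ioo 0 1) :
    jacobiWeight a b x * jacobiWeight a' b' x = jacobiWeight (a + a') (b + b') x := by
  rw [jacobiWeight, jacobiWeight, jacobiWeight, rpow_add hx.1, rpow_add (sub_pos.mpr hx.2)]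
  ring

lemma jacobiWeight_neg_half (hx : x ∈ Ioo 0 1) :
    jacobiWeight (-(1 / 2)) (-(1 / 2)) x = (√(x * (1 - x)))⁻¹ := by
  rw [jacobiWeight, rpow_neg hx.1.le, rpow_neg (sub_pos.mpr hx.2).le, ← sqrt_eq_rpow,
    ← sqrt_eq_rpow, ← mul_inv, ← sqrt_mul hx.1.le]

lemma differentiableAt_jacobiWeight (hx : x ∈ Ioo 0 1) :
    DifferentiableAt ℝ (jacobiWeight a b) x :=
  (differentiableAt_id.rpow_const (Or.inl hx.1.ne')).mul
    ((differentiableAt_const 1 |>.sub differentiableAt_id).rpow_const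
      (Or.inl (sub_pos.mpr hx.2).ne'))

lemma monotoneOn_jacobiWeight (ha : 0 ≤ a) (hb : b ≤ 0) :
    MonotoneOn (jacobiWeight a b) (Ioo 0 1) := fun x hx y hy hxy =>
  mul_le_mul (rpow_le_rpow hx.1.le hxy ha)
    (rpow_le_rpow_of_nonpos (sub_pos.mpr hy.2) (by linarith) hb)
    (rpow_nonneg (sub_pos.mpr hx.2).le _) (rpow_nonneg hy.1.le _)

lemma integrableOn_jacobiWeight (ha : -1 < a) (hb : -1 < b) :
    IntegrableOn (jacobiWeight a b) (Ioo 0 1) := by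
  have hbeta := (Complex.betaIntegral_convergent (u := a + 1) (v := b + 1)
    (by simp only [Complex.add_re, Complex.ofReal_re, Complex.one_re]; linarith)
    (by simp only [Complex.add_re, Complex.ofReal_re, Complex.one_re]; linarith)).1
  rw [integrableOn_Ioc_iff_integrableOn_Ioo] at hbeta
  refine IntegrableOn.congr_fun hbeta.norm (fun x hx => ?_) measurableSet_Ioo
  rw [norm_mul, add_sub_cancel_right, add_sub_cancel_right, ← Complex.ofReal_one,
    ← Complex.ofReal_sub, Complex.norm_cpow_eq_rpow_re_of_pos hx.1,
    Complex.norm_cpow_eq_rpow_re_of_pos (sub_pos.mpr hx.2)]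
  simp [jacobiWeight]

lemma integral_jacobiWeight_pos (ha : -1 < a) (hb : -1 < b) :
    0 < ∫ x in Ioo 0 1, jacobiWeight a b x := by
  rw [setIntegral_pos_iff_support_of_nonneg_ae
    (ae_restrict_of_forall_mem measurableSet_Ioo fun x hx => (jacobiWeight_pos hx).le)
    (integrableOn_jacobiWeight ha hb)]
  calc (0 : ENNReal) < volume (Ioo (0 : ℝ) 1) := by simp
    _ ≤ _ := measure_mono fun x (hx : x ∈ Ioo 0 1) =>
      (⟨(jacobiWeight_pos hx).ne', hx⟩ : x ∈ Function.support (jacobiWeight a b) ∩ Ioo 0 1)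

lemma integrableOn_jacobiWeight_sub_div_sub {c : ℝ} (ha : -1 < a) (hb : -1 < b)
    (hc : c ∈ Ioo 0 1) :
    IntegrableOn (fun x => (jacobiWeight a b x - jacobiWeight a b c) / (c - x)) (Ioo 0 1) :=
  integrable_sub_div_sub_of_differentiableAt (integrableOn_jacobiWeight ha hb)
    (differentiableAt_jacobiWeight hc)

end JacobiWeight

section Arcsine

variable {c x : ℝ}

def arcsinePVPrimitive (c x : ℝ) : ℝ :=
  2 / √(c * (1 - c)) * log (√(c * (1 - x)) + √(x * (1 - c)))

lemma hasDerivAt_arcsinePVPrimitive (hc : c ∈ Ioo 0 1) (hx : x ∈ Ioo 0 1) (hne : x ≠ c) :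
    HasDerivAt (arcsinePVPrimitive c)
      ((jacobiWeight (-(1 / 2)) (-(1 / 2)) x - jacobiWeight (-(1 / 2)) (-(1 / 2)) c) / (c - x))
      x := by
  have hc1 : 0 < 1 - c := sub_pos.mpr hc.2
  have hx1 : 0 < 1 - x := sub_pos.mpr hx.2
  have hc0 := hc.1
  have hx0 := hx.1
  set p := √(c * (1 - x)) with hp
  set q := √(x * (1 - c)) with hq
  set r := √(x * (1 - x)) with hr
  set s := √(c * (1 - c)) with hs
  have hp0 : 0 < p := sqrt_pos.mpr (by positivity)
  have hq0 : 0 < q := sqrt_pos.mpr (by positivity)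
  have hr0 : 0 < r := sqrt_pos.mpr (by positivity)
  have hs0 : 0 < s := sqrt_pos.mpr (by positivity)
  have hp2 : p ^ 2 = c * (1 - x) := sq_sqrt (by positivity)
  have hq2 : q ^ 2 = x * (1 - c) := sq_sqrt (by positivity)
  have hs2 : s ^ 2 = c * (1 - c) := sq_sqrt (by positivity)
  have hpq : p * q = s * r := by
    rw [hp, hq, hs, hr, ← sqrt_mul (by positivity), ← sqrt_mul (by positivity)]
    ring_nf
  have hdp : HasDerivAt (fun y => √(c * (1 - y))) (1 / (2 * p) * -c) x := by
    refine (hasDerivAt_sqrt (by positivity)).comp x ?_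
    simpa using ((hasDerivAt_id x).const_sub 1).const_mul c
  have hdq : HasDerivAt (fun y => √(y * (1 - c))) (1 / (2 * q) * (1 - c)) x := by
    refine (hasDerivAt_sqrt (by positivity)).comp x ?_
    simpa using (hasDerivAt_id x).mul_const (1 - c)
  have hsum : HasDerivAt (fun y => √(c * (1 - y)) + √(y * (1 - c)))
      (1 / (2 * p) * -c + 1 / (2 * q) * (1 - c)) x := hdp.add hdq
  refine (hsum.log (add_pos hp0 hq0).ne').const_mul (2 / s) |>.congr_deriv ?_
  rw [jacobiWeight_neg_half hx, jacobiWeight_neg_half hc, ← hp, ← hq, ← hr, ← hs]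
  have key : ((1 - c) * p - c * q) * (p - q) = s ^ 2 - s * r := by
    rw [hs2, ← hpq]
    nlinarith [hp2, hq2]
  have hexp : c - x = (p - q) * (p + q) := by nlinarith [hp2, hq2]
  field_simp
  linear_combination (p + q) * (r - s) * hpq + r * ((1 - c) * p - c * q) * hexp
    + r * (p + q) * key

lemma continuousOn_arcsinePVPrimitive (hc : c ∈ Ioo 0 1) :
    ContinuousOn (arcsinePVPrimitive c) (Icc 0 1) := by
  refine continuousOn_const.mul (ContinuousOn.log (by fun_prop) fun x hx => ?_)
  have hsum : 0 < √(c * (1 - x)) + √(x * (1 - c)) := by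
    rcases hx.2.lt_or_eq with hx1 | rfl
    · exact add_pos_of_pos_of_nonneg (sqrt_pos.mpr (mul_pos hc.1 (sub_pos.mpr hx1)))
        (sqrt_nonneg _)
    · exact add_pos_of_nonneg_of_pos (sqrt_nonneg _)
        (sqrt_pos.mpr (mul_pos one_pos (sub_pos.mpr hc.2)))
  exact hsum.ne'

theorem cauchyPV_jacobiWeight_neg_half (hc : c ∈ Ioo 0 1) :
    cauchyPV (jacobiWeight (-(1 / 2)) (-(1 / 2))) 0 1 c = 0 := by
  have hq := integrableOn_jacobiWeight_sub_div_sub (a := -(1 / 2)) (b := -(1 / 2))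
    (by norm_num) (by norm_num) hc
  have hFTC := integral_eq_of_hasDerivAt_off_countable_of_le _ _ zero_le_one
    (countable_singleton c) (continuousOn_arcsinePVPrimitive hc)
    (fun x hx => hasDerivAt_arcsinePVPrimitive hc hx.1 hx.2)
    ((intervalIntegrable_iff_integrableOn_Ioo_of_le zero_le_one).mpr hq)
  rw [intervalIntegral.integral_of_le zero_le_one, integral_Ioc_eq_integral_Ioo] at hFTC
  rw [cauchyPV, hFTC, jacobiWeight_neg_half hc, arcsinePVPrimitive, arcsinePVPrimitive]
  simp only [sub_self, sub_zero, mul_zero, zero_mul, one_mul, mul_one, sqrt_zero, zero_add,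
    add_zero, log_sqrt (sub_pos.mpr hc.2).le, log_sqrt hc.1.le]
  field_simp
  ring

end Arcsine

theorem cauchyPV_jacobiWeight_nonpos {a b c : ℝ} (ha : -(1 / 2) ≤ a) (hb₁ : -1 < b)
    (hb₂ : b ≤ -(1 / 2)) (hc : c ∈ Ioo 0 1) :
    cauchyPV (jacobiWeight a b) 0 1 c ≤ 0 := by
  calc cauchyPV (jacobiWeight a b) 0 1 c
      ≤ jacobiWeight (a + 1 / 2) (b + 1 / 2) c
        * cauchyPV (jacobiWeight (-(1 / 2)) (-(1 / 2))) 0 1 c :=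
        cauchyPV_le_of_monotoneOn hc (monotoneOn_jacobiWeight (by linarith) (by linarith))
          (fun x hx => (jacobiWeight_pos hx).le)
          (fun x hx => by rw [jacobiWeight_mul _ _ hx]; ring_nf)
          (integrableOn_jacobiWeight_sub_div_sub (by linarith) hb₁ hc)
          (integrableOn_jacobiWeight_sub_div_sub (by norm_num) (by norm_num) hc)
    _ = 0 := by rw [cauchyPV_jacobiWeight_neg_half hc, mul_zero]

lemma re_integral_inv_ofReal_add_mul_I_sub (μ : Measure ℝ) [IsFiniteMeasure μ] (c : ℝ) {t : ℝ}
    (ht : t ≠ 0) :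
    (∫ x, ((c : ℂ) + t * Complex.I - x)⁻¹ ∂μ).re = ∫ x, conjPoissonKernel t (c - x) ∂μ := by
  have hbound : ∀ x : ℝ, ‖((c : ℂ) + t * Complex.I - x)⁻¹‖ ≤ |t|⁻¹ := fun x => by
    rw [norm_inv]
    refine inv_anti₀ (abs_pos.mpr ht) ?_
    simpa using Complex.abs_im_le_norm ((c : ℂ) + t * Complex.I - x)
  have hint : Integrable (fun x : ℝ => ((c : ℂ) + t * Complex.I - x)⁻¹) μ :=
    .of_bound (by fun_prop : Measurable _).aestronglyMeasurable _ (ae_of_all _ hbound)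
  rw [← RCLike.re_eq_complex_re, ← integral_re hint]
  simp_rw [RCLike.re_eq_complex_re, re_inv_ofReal_add_mul_I_sub]

lemma integral_withDensity_ofReal_indicator {X : Type*} [MeasurableSpace X] {μ : Measure X}
    {s : Set X} {f : X → ℝ} (hs : MeasurableSet s) (hf : Measurable f)
    (hf₀ : ∀ x ∈ s, 0 ≤ f x) (g : X → ℝ) :
    ∫ x, g x ∂μ.withDensity (fun x => ENNReal.ofReal (s.indicator f x))
      = ∫ x in s, f x * g x ∂μ := by
  rw [integral_withDensity_eq_integral_toReal_smul (hf.indicator hs).ennreal_ofReal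
    (ae_of_all _ fun _ => ENNReal.ofReal_lt_top), ← integral_indicator hs]
  congr 1 with x
  by_cases hx : x ∈ s
  · simp [hx, ENNReal.toReal_ofReal (hf₀ x hx)]
  · simp [hx]

/-- Let `a ≥ −1/2`, `−1 < b ≤ −1/2`, and let `μ` be the Jacobi-type
probability measure on `ℝ` with density `x^a (1−x)^b / Z` on `(0,1)`, where
`Z = ∫₀¹ x^a (1−x)^b dx`.  Then for every `x₀ ∈ (0,1)` the boundary values from the
upper half plane of the real part of the Cauchy transform of `μ` exist and are
nonpositive: there is `L ≤ 0` with `Re G_μ(x₀ + i t) → L` as `t → 0⁺`. -/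
theorem statement17 (a b : ℝ) (ha : -(1 / 2 : ℝ) ≤ a) (hb1 : (-1 : ℝ) < b)
    (hb2 : b ≤ -(1 / 2 : ℝ)) :
    let Z : ℝ := ∫ x in Set.Ioo (0 : ℝ) 1, x ^ a * (1 - x) ^ b
    let μ : Measure ℝ := volume.withDensity fun x =>
      ENNReal.ofReal (Set.indicator (Set.Ioo (0 : ℝ) 1)
        (fun x => x ^ a * (1 - x) ^ b / Z) x)
    ∀ x₀ ∈ Set.Ioo (0 : ℝ) 1, ∃ L : ℝ, L ≤ 0 ∧
      Tendsto (fun t : ℝ => (∫ x, ((x₀ : ℂ) + (t : ℂ) * Complex.I - (x : ℂ))⁻¹ ∂μ).re)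
        (𝓝[>] (0 : ℝ)) (𝓝 L) := by
  intro Z μ c hc
  have hw : IntegrableOn (jacobiWeight a b) (Ioo 0 1) := integrableOn_jacobiWeight (by linarith) hb1
  have hZ : 0 < Z := integral_jacobiWeight_pos (by linarith) hb1
  have hdensity : ∀ x ∈ Ioo (0 : ℝ) 1, 0 ≤ jacobiWeight a b x / Z :=
    fun x hx => div_nonneg (jacobiWeight_pos hx).le hZ.le
  have : IsFiniteMeasure μ :=
    isFiniteMeasure_withDensity_ofReal
      (IntegrableOn.integrable_indicator (hw.div_const Z) measurableSet_Ioo).2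
  refine ⟨cauchyPV (jacobiWeight a b) 0 1 c / Z,
    div_nonpos_of_nonpos_of_nonneg (cauchyPV_jacobiWeight_nonpos ha hb1 hb2 hc) hZ.le, ?_⟩
  refine ((tendsto_setIntegral_conjPoissonKernel_mul hc
    (integrableOn_jacobiWeight_sub_div_sub (by linarith) hb1 hc)).div_const Z).mono_left
    (nhdsGT_le_nhdsNE 0) |>.congr' ?_
  filter_upwards [self_mem_nhdsWithin] with t (ht : 0 < t)
  have hμ : ∫ x, conjPoissonKernel t (c - x) ∂μ
      = ∫ x in Ioo 0 1, jacobiWeight a b x / Z * conjPoissonKernel t (c - x) :=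
    integral_withDensity_ofReal_indicator measurableSet_Ioo (by unfold jacobiWeight; fun_prop)
      hdensity _
  rw [re_integral_inv_ofReal_add_mul_I_sub μ c ht.ne', hμ, ← integral_div]
  congr 1 with x
  ring
end
end

section
/- Let μ be the uniform probability measure on [0, 1] (Lebesgue measure restricted to [0,1]). For every z ∈ ℂ with Re z > 1, setting u := ∫₀¹ (z − x)^{−1} dx ∈ ℂ, one has Re(u·1) − ∫₀¹ log|1 − x| dx > Re(u·z) − ∫₀¹ log|z − x| dx; equivalently, since ∫₀¹ log|1 − x| dx = −1, Re(u) + 1 > Re(u·z) − ∫₀¹ log|z − x| dx. -/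
open MeasureTheory intervalIntegral

/-!
For `Re z > 1` the segment `z - [0, 1]` lies in the right half-plane, where the principal
logarithm gives antiderivatives: `u = log z - log (z - 1)` and
`∫₀¹ log (z - x) dx = z log z - (z - 1) log (z - 1) - 1`, whose real part is `∫₀¹ log |z - x|`.
Hence `Re (u z) - ∫₀¹ log |z - x| = 1 - log |z - 1|`, while `Re u + 1 = log |z| - log |z - 1| + 1`,
so the inequality is just `log |z| > 0`, i.e. `|z| ≥ Re z > 1`.
-/

namespace Complex

variable {z : ℂ} {a b : ℝ}

theorem hasDerivAt_log_sub_ofReal {x : ℝ} (hx : z - x ∈ slitPlane) :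
    HasDerivAt (fun t : ℝ => log (z - t)) (-(z - x)⁻¹) x := by
  simpa using ((hasDerivAt_log hx).comp (x : ℂ) ((hasDerivAt_id (x : ℂ)).const_sub z)).comp_ofReal

variable (h : ∀ x ∈ Set.uIcc a b, z - x ∈ slitPlane)
include h

theorem integral_inv_sub_ofReal :
    ∫ x in a..b, (z - x)⁻¹ = log (z - a) - log (z - b) := by
  have hne : ∀ x ∈ Set.uIcc a b, z - x ≠ 0 := fun x hx => slitPlane_ne_zero (h x hx)
  have hint : IntervalIntegrable (fun x : ℝ => (z - x)⁻¹) volume a b :=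
    ((continuous_const.sub continuous_ofReal).continuousOn.inv₀ hne).intervalIntegrable
  rw [integral_eq_sub_of_hasDerivAt
    (fun x hx => ((hasDerivAt_log_sub_ofReal (h x hx)).neg).congr_deriv (neg_neg _)) hint]
  simp only [Pi.neg_apply]
  ring

theorem integral_log_sub_ofReal :
    ∫ x in a..b, log (z - x) = (z - a) * log (z - a) - (z - b) * log (z - b) - (b - a) := by
  have hint : IntervalIntegrable (fun x : ℝ => log (z - x)) volume a b :=
    ((continuous_const.sub continuous_ofReal).continuousOn.clog h).intervalIntegrable
  have hderiv : ∀ x ∈ Set.uIcc a b, HasDerivAt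
      (fun t : ℝ => (z - t) - (z - t) * log (z - t)) (log (z - x)) x := by
    intro x hx
    have hlin : HasDerivAt (fun t : ℝ => z - (t : ℂ)) (-1) x := by
      simpa using ((hasDerivAt_id (x : ℂ)).const_sub z).comp_ofReal
    refine (hlin.sub (hlin.mul (hasDerivAt_log_sub_ofReal (h x hx)))).congr_deriv ?_
    field_simp [slitPlane_ne_zero (h x hx)]
    ring
  rw [integral_eq_sub_of_hasDerivAt hderiv hint]
  ring

theorem integral_log_norm_sub_ofReal :
    ∫ x in a..b, Real.log ‖z - x‖ =
      ((z - a) * log (z - a) - (z - b) * log (z - b) - (b - a)).re := by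
  have hint : IntervalIntegrable (fun x : ℝ => log (z - x)) volume a b :=
    ((continuous_const.sub continuous_ofReal).continuousOn.clog h).intervalIntegrable
  rw [← integral_log_sub_ofReal h, ← reCLM_apply, ← reCLM.intervalIntegral_comp_comm hint]
  simp [log_re]

end Complex

theorem integral_log_abs_one_sub : ∫ x in (0 : ℝ)..1, Real.log |1 - x| = -1 := by
  simp only [Real.log_abs]
  rw [intervalIntegral.integral_comp_sub_left (fun x => Real.log x), integral_log]
  norm_num

/-- For the uniform measure on `[0,1]` and any `z ∈ ℂ` with
`Re z > 1`, setting `u := ∫₀¹ (z − x)⁻¹ dx`, one has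
`Re(u·1) − ∫₀¹ log|1 − x| dx > Re(u·z) − ∫₀¹ log|z − x| dx`. -/
theorem statement18 (z : ℂ) (hz : 1 < z.re) :
    let u : ℂ := ∫ x in (0 : ℝ)..1, (z - (x : ℂ))⁻¹
    (u * z).re - (∫ x in (0 : ℝ)..1, Real.log ‖z - (x : ℂ)‖) <
      (u * 1).re - ∫ x in (0 : ℝ)..1, Real.log |1 - x| := by
  intro u
  have hslit : ∀ x ∈ Set.uIcc (0 : ℝ) 1, z - x ∈ Complex.slitPlane := by
    intro x hx
    rw [Set.uIcc_of_le zero_le_one] at hx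
    exact Complex.mem_slitPlane_iff.2 (Or.inl (by simp; linarith [hx.2]))
  have hlog_z : 0 < (Complex.log z).re := by
    rw [Complex.log_re]
    exact Real.log_pos (hz.trans_le (Complex.re_le_norm z))
  simp only [u, Complex.integral_inv_sub_ofReal hslit, Complex.integral_log_norm_sub_ofReal hslit,
    integral_log_abs_one_sub, Complex.ofReal_zero, Complex.ofReal_one, sub_zero]
  rw [← Complex.sub_re, show (Complex.log z - Complex.log (z - 1)) * z -
      (z * Complex.log z - (z - 1) * Complex.log (z - 1) - 1) = 1 - Complex.log (z - 1) by ring]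
  simp only [mul_one, Complex.sub_re, Complex.one_re]
  linarith
end

section
/- Let k ≥ 1, let 𝔠 = (𝔠₁, …, 𝔠_k) ∈ ℝ^k with 𝔠_i ≠ 0 for every i, and let ξ ≥ 0 and c > 0 be real numbers. Then there exist constants C₂ > C₁ > 0 such that for every integer N ≥ 1 and every u = (u₁, …, u_k) ∈ ℂ^k satisfying min_{i ≠ j} ( |u_i − u_j|, |(u_i + N^{−ξ} 𝔠_i) − (u_j + N^{−ξ} 𝔠_j)|, |(u_i + N^{−ξ} 𝔠_i) − u_j| ) ≥ c·N^{−ξ}, one has C₁·N^{−kξ} ≤ | D(u + N^{−ξ} 𝔠; −u) / ( Δ(u + N^{−ξ} 𝔠) · Δ(−u) ) | ≤ C₂·N^{−kξ}, where u + N^{−ξ} 𝔠 := (u₁ + N^{−ξ} 𝔠₁, …, u_k + N^{−ξ} 𝔠_k). (For k = 1 the separation condition is vacuous.) -/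
/-!
Write `x = u + N^{-ξ}𝔠`. The diagonal factors `x i - u i = N^{-ξ} 𝔠 i` of `D(x; -u)` give
`N^{-(k+1)ξ} ∏ |𝔠 i|`; the other factors pair off with those of the two Vandermonde products
into the ratios `(x i - u j)/(x i - x j)` and `(x j - u i)/(u j - u i)` for `i < j`. In each ratio
numerator and denominator differ by `x j - u j = O(N^{-ξ})` while both are at least `c N^{-ξ}`,
so it lies between `κ⁻¹` and `κ` for a constant `κ` depending only on `c` and `𝔠`.
-/

open Complex Finset Filter Topology

noncomputable section

/-- Vandermonde product `Δ(w) = ∏_{i<j} (w i - w j)`. -/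
def vprod {m : ℕ} (w : Fin m → ℂ) : ℂ :=
  ∏ i : Fin m, ∏ j : Fin m, if i < j then w i - w j else 1

/-- `D(x;y) = ∏_{i,j} (x i + y j)`. -/
def dprod {m n : ℕ} (x : Fin m → ℂ) (y : Fin n → ℂ) : ℂ :=
  ∏ i : Fin m, ∏ j : Fin n, (x i + y j)

theorem Fintype.prod_prod_eq_prod_diag_mul_prod_lt {ι M : Type*} [Fintype ι] [LinearOrder ι]
    [CommMonoid M] (f : ι → ι → M) :
    ∏ i, ∏ j, f i j = (∏ i, f i i) * ∏ i, ∏ j, if i < j then f i j * f j i else 1 := by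
  have hsplit : ∀ i j, f i j = (if i = j then f i j else 1) *
      ((if i < j then f i j else 1) * (if j < i then f i j else 1)) := by
    intro i j
    rcases lt_trichotomy i j with h | rfl | h
    · simp [h, h.ne, h.not_gt]
    · simp
    · simp [h, h.ne', h.not_gt]
  have hswap : ∏ i, ∏ j, (if j < i then f i j else 1) = ∏ i, ∏ j, if i < j then f j i else 1 :=
    prod_comm
  calc ∏ i, ∏ j, f i j
      = ∏ i, ∏ j, (if i = j then f i j else 1) *
          ((if i < j then f i j else 1) * (if j < i then f i j else 1)) :=
        Finset.prod_congr rfl fun i _ => Finset.prod_congr rfl fun j _ => hsplit i j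
    _ = (∏ i, f i i) * ((∏ i, ∏ j, if i < j then f i j else 1) *
          ∏ i, ∏ j, if i < j then f j i else 1) := by
        simp only [prod_mul_distrib, prod_ite_eq, hswap]
    _ = _ := by simp only [← prod_mul_distrib, ite_mul_ite, one_mul]

theorem dprod_neg_div_vprod_mul_vprod_neg {n : ℕ} (x u : Fin n → ℂ) :
    dprod x (fun j => -u j) / (vprod x * vprod fun j => -u j) =
      (∏ i, (x i - u i)) * ∏ i, ∏ j,
        if i < j then (x i - u j) * (x j - u i) / ((x i - x j) * (u j - u i)) else 1 := by
  have hD : dprod x (fun j => -u j) =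
      (∏ i, (x i - u i)) * ∏ i, ∏ j, if i < j then (x i - u j) * (x j - u i) else 1 := by
    simp only [dprod, ← sub_eq_add_neg]
    exact Fintype.prod_prod_eq_prod_diag_mul_prod_lt fun i j => x i - u j
  have hV : vprod (fun j => -u j) = ∏ i, ∏ j, if i < j then u j - u i else 1 := by
    simp only [vprod, neg_sub_neg]
  rw [hD, hV, vprod, mul_div_assoc]
  simp only [← prod_mul_distrib, ← prod_div_distrib, ite_mul_ite, one_mul, ite_div_ite, div_one]

section NormRatio

variable {E : Type*} [SeminormedAddCommGroup E] {c M ε : ℝ} {z w : E}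

theorem mul_norm_le_of_norm_sub_le (hc : 0 ≤ c) (hM : 0 ≤ M) (hz : c * ε ≤ ‖z‖)
    (hd : ‖z - w‖ ≤ M * ε) : c * ‖w‖ ≤ (c + M) * ‖z‖ := by
  have := norm_le_norm_add_norm_sub' w z
  rw [norm_sub_rev] at this
  nlinarith [mul_le_mul_of_nonneg_left hz hM]

theorem norm_div_norm_mem_of_norm_sub_le (hc : 0 < c) (hM : 0 ≤ M) (hε : 0 < ε)
    (hz : c * ε ≤ ‖z‖) (hw : c * ε ≤ ‖w‖) (hd : ‖z - w‖ ≤ M * ε) :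
    ((c + M) / c)⁻¹ ≤ ‖z‖ / ‖w‖ ∧ ‖z‖ / ‖w‖ ≤ (c + M) / c := by
  have hw0 : 0 < ‖w‖ := (mul_pos hc hε).trans_le hw
  rw [inv_div, div_le_div_iff₀ (by linarith) hw0, div_le_div_iff₀ hw0 hc]
  constructor
  · linarith [mul_norm_le_of_norm_sub_le hc.le hM hz hd]
  · linarith [mul_norm_le_of_norm_sub_le hc.le hM hw (by rwa [norm_sub_rev])]

end NormRatio

theorem Fintype.prod_mem_Icc_inv_pow_card {ι : Type*} [Fintype ι] {f : ι → ℝ} {b : ℝ}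
    (hb : 0 < b) (hf : ∀ i, f i ∈ Set.Icc b⁻¹ b) :
    ∏ i, f i ∈ Set.Icc (b ^ Fintype.card ι)⁻¹ (b ^ Fintype.card ι) := by
  constructor
  · calc (b ^ Fintype.card ι)⁻¹ = ∏ _i : ι, b⁻¹ := by simp
      _ ≤ ∏ i, f i := prod_le_prod (fun _ _ => by positivity) fun i _ => (hf i).1
  · calc ∏ i, f i ≤ ∏ _i : ι, b := prod_le_prod (fun i _ => (inv_pos.2 hb).le.trans (hf i).1)
          fun i _ => (hf i).2
      _ = b ^ Fintype.card ι := by simp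

theorem norm_dprod_div_vprod_mem_Icc {n : ℕ} {c M ε : ℝ} (hc : 0 < c) (hM : 0 ≤ M) (hε : 0 < ε)
    (x u : Fin n → ℂ)
    (hsep : ∀ i j, i ≠ j →
      c * ε ≤ ‖u i - u j‖ ∧ c * ε ≤ ‖x i - x j‖ ∧ c * ε ≤ ‖x i - u j‖)
    (hshift : ∀ i, ‖x i - u i‖ ≤ M * ε) :
    ‖dprod x (fun j => -u j) / (vprod x * vprod fun j => -u j)‖ ∈
      Set.Icc ((∏ i, ‖x i - u i‖) / ((c + M) / c) ^ (2 * (n * n)))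
        ((∏ i, ‖x i - u i‖) * ((c + M) / c) ^ (2 * (n * n))) := by
  set κ := (c + M) / c
  have hκ : 1 ≤ κ := by rw [le_div_iff₀ hc]; linarith
  have hfactor : ∀ i j : Fin n, ‖if i < j then (x i - u j) * (x j - u i) /
      ((x i - x j) * (u j - u i)) else 1‖ ∈ Set.Icc (κ ^ 2)⁻¹ (κ ^ 2) := by
    intro i j
    split_ifs with hij
    · obtain ⟨h1, h2⟩ := norm_div_norm_mem_of_norm_sub_le hc hM hε (hsep i j hij.ne).2.2
        (hsep i j hij.ne).2.1 (by simpa using hshift j)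
      obtain ⟨h3, h4⟩ := norm_div_norm_mem_of_norm_sub_le hc hM hε (hsep j i hij.ne').2.2
        (hsep j i hij.ne').1 (by simpa using hshift j)
      rw [norm_div, norm_mul, norm_mul, mul_div_mul_comm, pow_two, mul_inv]
      exact ⟨mul_le_mul h1 h3 (by positivity) (by positivity),
        mul_le_mul h2 h4 (by positivity) (by positivity)⟩
    · rw [norm_one]
      exact ⟨inv_le_one_of_one_le₀ (one_le_pow₀ hκ), one_le_pow₀ hκ⟩
  have hprod := Fintype.prod_mem_Icc_inv_pow_card (pow_pos (by positivity) 2)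
    fun p : Fin n × Fin n => hfactor p.1 p.2
  rw [Fintype.prod_prod_type, Fintype.card_prod, Fintype.card_fin, ← pow_mul] at hprod
  have hdiag : 0 ≤ ∏ i, ‖x i - u i‖ := by positivity
  simp only [dprod_neg_div_vprod_mul_vprod_neg, norm_mul, norm_prod]
  exact ⟨by rw [div_eq_mul_inv]; exact mul_le_mul_of_nonneg_left hprod.1 hdiag,
    mul_le_mul_of_nonneg_left hprod.2 hdiag⟩

theorem statement19_general (k : ℕ) (𝔠 : Fin (k + 1) → ℝ) (h𝔠 : ∀ i, 𝔠 i ≠ 0)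
    (ξ : ℝ) (c : ℝ) (hc : 0 < c) :
    ∃ C₁ C₂ : ℝ, 0 < C₁ ∧ C₁ < C₂ ∧
      ∀ N : ℕ, 1 ≤ N → ∀ u : Fin (k + 1) → ℂ,
        (∀ i j : Fin (k + 1), i ≠ j →
          c * (N : ℝ) ^ (-ξ) ≤ ‖u i - u j‖ ∧
          c * (N : ℝ) ^ (-ξ) ≤
            ‖(u i + (((N : ℝ) ^ (-ξ) * 𝔠 i : ℝ) : ℂ)) -
              (u j + (((N : ℝ) ^ (-ξ) * 𝔠 j : ℝ) : ℂ))‖ ∧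
          c * (N : ℝ) ^ (-ξ) ≤
            ‖(u i + (((N : ℝ) ^ (-ξ) * 𝔠 i : ℝ) : ℂ)) - u j‖) →
        C₁ * (N : ℝ) ^ (-((k : ℝ) + 1) * ξ) ≤
            ‖dprod (fun i => u i + (((N : ℝ) ^ (-ξ) * 𝔠 i : ℝ) : ℂ)) (fun j => -u j) /
                (vprod (fun i => u i + (((N : ℝ) ^ (-ξ) * 𝔠 i : ℝ) : ℂ)) *
                  vprod fun j => -u j)‖ ∧
          ‖dprod (fun i => u i + (((N : ℝ) ^ (-ξ) * 𝔠 i : ℝ) : ℂ)) (fun j => -u j) /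
                (vprod (fun i => u i + (((N : ℝ) ^ (-ξ) * 𝔠 i : ℝ) : ℂ)) *
                  vprod fun j => -u j)‖ ≤
            C₂ * (N : ℝ) ^ (-((k : ℝ) + 1) * ξ) := by
  set M := ∑ i, |𝔠 i|
  set P := ∏ i, |𝔠 i|
  set K := ((c + M) / c) ^ (2 * ((k + 1) * (k + 1)))
  have hM : 0 ≤ M := by positivity
  have hP : 0 < P := prod_pos fun i _ => abs_pos.2 (h𝔠 i)
  have hK : 1 ≤ K := one_le_pow₀ <| by rw [le_div_iff₀ hc]; linarith
  refine ⟨P / K, 2 * (P * K), by positivity, ?_, ?_⟩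
  · calc P / K ≤ P * K := (div_le_self hP.le hK).trans (le_mul_of_one_le_right hP.le hK)
      _ < 2 * (P * K) := by linarith [mul_pos hP (zero_lt_one.trans_le hK)]
  intro N hN u hu
  set ε := (N : ℝ) ^ (-ξ)
  have hε : 0 < ε := by positivity
  have hshift : ∀ i, ‖(u i + ((ε * 𝔠 i : ℝ) : ℂ)) - u i‖ = |𝔠 i| * ε := fun i => by
    rw [add_sub_cancel_left, norm_real, Real.norm_eq_abs, abs_mul, abs_of_pos hε, mul_comm]
  obtain ⟨hlo, hhi⟩ := norm_dprod_div_vprod_mem_Icc hc hM hε _ u hu fun i =>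
    (hshift i).trans_le <| mul_le_mul_of_nonneg_right
      (single_le_sum (fun j _ => abs_nonneg (𝔠 j)) (mem_univ i)) hε.le
  have hpow : (N : ℝ) ^ (-((k : ℝ) + 1) * ξ) = ε ^ (k + 1) := by
    rw [← Real.rpow_natCast, ← Real.rpow_mul (Nat.cast_nonneg N)]
    push_cast; ring_nf
  simp only [hshift, prod_mul_distrib, prod_const, card_univ, Fintype.card_fin] at hlo hhi
  rw [hpow]
  have hPK : 0 < P * K * ε ^ (k + 1) := by positivity
  constructor
  · calc P / K * ε ^ (k + 1) = P * ε ^ (k + 1) / K := by ring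
      _ ≤ _ := hlo
  · calc _ ≤ P * ε ^ (k + 1) * K := hhi
      _ ≤ 2 * (P * K) * ε ^ (k + 1) := by linarith

/-- Two-sided bound on the Cauchy-determinant prefactor: there are
constants `C₂ > C₁ > 0` such that for all `N ≥ 1` and all `u ∈ ℂ^k` whose entries (and
their `N^{-ξ}𝔠`-shifts) are `c N^{-ξ}`-separated,
`C₁ N^{-kξ} ≤ |D(u + N^{-ξ}𝔠; -u)/(Δ(u + N^{-ξ}𝔠) Δ(-u))| ≤ C₂ N^{-kξ}`.
Here the number of variables is `k + 1 ≥ 1`. -/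
theorem statement19 (k : ℕ) (𝔠 : Fin (k + 1) → ℝ) (h𝔠 : ∀ i, 𝔠 i ≠ 0)
    (ξ : ℝ) (hξ : 0 ≤ ξ) (c : ℝ) (hc : 0 < c) :
    ∃ C₁ C₂ : ℝ, 0 < C₁ ∧ C₁ < C₂ ∧
      ∀ N : ℕ, 1 ≤ N → ∀ u : Fin (k + 1) → ℂ,
        (∀ i j : Fin (k + 1), i ≠ j →
          c * (N : ℝ) ^ (-ξ) ≤ ‖u i - u j‖ ∧
          c * (N : ℝ) ^ (-ξ) ≤
            ‖(u i + (((N : ℝ) ^ (-ξ) * 𝔠 i : ℝ) : ℂ)) -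
              (u j + (((N : ℝ) ^ (-ξ) * 𝔠 j : ℝ) : ℂ))‖ ∧
          c * (N : ℝ) ^ (-ξ) ≤
            ‖(u i + (((N : ℝ) ^ (-ξ) * 𝔠 i : ℝ) : ℂ)) - u j‖) →
        C₁ * (N : ℝ) ^ (-((k : ℝ) + 1) * ξ) ≤
            ‖dprod (fun i => u i + (((N : ℝ) ^ (-ξ) * 𝔠 i : ℝ) : ℂ)) (fun j => -u j) /
                (vprod (fun i => u i + (((N : ℝ) ^ (-ξ) * 𝔠 i : ℝ) : ℂ)) *
                  vprod fun j => -u j)‖ ∧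
          ‖dprod (fun i => u i + (((N : ℝ) ^ (-ξ) * 𝔠 i : ℝ) : ℂ)) (fun j => -u j) /
                (vprod (fun i => u i + (((N : ℝ) ^ (-ξ) * 𝔠 i : ℝ) : ℂ)) *
                  vprod fun j => -u j)‖ ≤
            C₂ * (N : ℝ) ^ (-((k : ℝ) + 1) * ξ) :=
  statement19_general k 𝔠 h𝔠 ξ c hc
end
end
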